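/- arXiv:1706.00390 — 5 statements merged into one kernel-verified Lean document; each statement's English description precedes it below -/
import Mathlib

section
/- For two probability distributions p and q on a finite set with supp(p) ⊆ supp(q), the Rényi relative entropy S_α(p‖q) := (1/(α-1)) ln(∑_x p(x)^α q(x)^{1-α}) is monotonically nondecreasing in α on (0,1)∪(1,∞). -/
open Real Finset

/-- Rényi relative entropy `S_α(p‖q)` between two probability mass functions on a
finite type (sums effectively run over the support of `p`, since `p x ^ α = 0`
when `p x = 0` and `α > 0`). -/
noncomputable def renyiRelEntropy {X : Type*} [Fintype X] (p q : X → ℝ) (α : ℝ) : ℝ :=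
  (α - 1)⁻¹ * Real.log (∑ x, p x ^ α * q x ^ (1 - α))

/-!
Put `w = p` on the support of `p` and `z = p / q`. Then `∑ p^α q^(1-α) = ∑ w z^(α-1)`, so
`S_α(p‖q) = t⁻¹ log M(t)` with `t = α - 1` and `M(t) = ∑ w z^t`: the logarithm of the
`w`-weighted power mean of `z` of order `t`, and the claim is the monotonicity of power means.
For `0 < a ≤ b` (resp. `a ≤ b < 0`), Jensen's inequality for `x ↦ x^(b/a)` (resp. `x^(a/b)`)
compares `M(a)` and `M(b)`; across `0`, Jensen's inequality for `log` gives
`t⁻¹ log M(t) ≤ ∑ w log z` for `t < 0` and `≥` for `t > 0`.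
-/

namespace Real

section RpowMoment

variable {ι : Type*} (s : Finset ι) (w z : ι → ℝ)

noncomputable def rpowMoment (t : ℝ) : ℝ := ∑ i ∈ s, w i * z i ^ t

variable {s w z}

theorem rpowMoment_pos (hw : ∀ i ∈ s, 0 ≤ w i) (hw1 : ∑ i ∈ s, w i = 1)
    (hz : ∀ i ∈ s, 0 < z i) (t : ℝ) : 0 < rpowMoment s w z t := by
  obtain ⟨i, hi, hwi⟩ : ∃ i ∈ s, 0 < w i := by
    by_contra! h
    linarith [sum_nonpos h]
  exact sum_pos' (fun j hj => mul_nonneg (hw j hj) (rpow_nonneg (hz j hj).le t))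
    ⟨i, hi, mul_pos hwi (rpow_pos_of_pos (hz i hi) t)⟩

theorem mul_log_rpowMoment_le (hw : ∀ i ∈ s, 0 ≤ w i) (hw1 : ∑ i ∈ s, w i = 1)
    (hz : ∀ i ∈ s, 0 < z i) (t : ℝ) {r : ℝ} (hr : 1 ≤ r) :
    r * log (rpowMoment s w z t) ≤ log (rpowMoment s w z (t * r)) := by
  have jensen : rpowMoment s w z t ^ r ≤ rpowMoment s w z (t * r) := by
    calc rpowMoment s w z t ^ r ≤ ∑ i ∈ s, w i * (z i ^ t) ^ r :=
          rpow_arith_mean_le_arith_mean_rpow s w _ hw hw1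
            (fun i hi => rpow_nonneg (hz i hi).le t) hr
      _ = rpowMoment s w z (t * r) :=
          sum_congr rfl fun i hi => by rw [← rpow_mul (hz i hi).le]
  have hM := rpowMoment_pos hw hw1 hz t
  rw [← log_rpow hM]
  exact log_le_log (rpow_pos_of_pos hM r) jensen

theorem mul_sum_mul_log_le_log_rpowMoment (hw : ∀ i ∈ s, 0 ≤ w i) (hw1 : ∑ i ∈ s, w i = 1)
    (hz : ∀ i ∈ s, 0 < z i) (t : ℝ) :
    t * ∑ i ∈ s, w i * log (z i) ≤ log (rpowMoment s w z t) := by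
  calc t * ∑ i ∈ s, w i * log (z i) = ∑ i ∈ s, w i • log (z i ^ t) := by
        rw [mul_sum]
        refine sum_congr rfl fun i hi => ?_
        rw [smul_eq_mul, log_rpow (hz i hi)]
        ring
    _ ≤ log (∑ i ∈ s, w i • z i ^ t) :=
        strictConcaveOn_log_Ioi.concaveOn.le_map_sum hw hw1
          fun i hi => rpow_pos_of_pos (hz i hi) t
    _ = log (rpowMoment s w z t) := rfl

theorem inv_mul_log_rpowMoment_mono (hw : ∀ i ∈ s, 0 ≤ w i) (hw1 : ∑ i ∈ s, w i = 1)
    (hz : ∀ i ∈ s, 0 < z i) {a b : ℝ} (ha : a ≠ 0) (hb : b ≠ 0) (hab : a ≤ b) :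
    a⁻¹ * log (rpowMoment s w z a) ≤ b⁻¹ * log (rpowMoment s w z b) := by
  rcases ha.lt_or_gt with ha | ha <;> rcases hb.lt_or_gt with hb | hb
  · have hpow := mul_log_rpowMoment_le hw hw1 hz b (r := a / b)
      ((one_le_div_of_neg hb).mpr hab)
    rw [mul_div_cancel₀ a hb.ne] at hpow
    calc a⁻¹ * log (rpowMoment s w z a) ≤ a⁻¹ * (a / b * log (rpowMoment s w z b)) :=
          mul_le_mul_of_nonpos_left hpow (inv_nonpos.mpr ha.le)
      _ = b⁻¹ * log (rpowMoment s w z b) := by field_simp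
  · set L := ∑ i ∈ s, w i * log (z i)
    calc a⁻¹ * log (rpowMoment s w z a) ≤ a⁻¹ * (a * L) :=
          mul_le_mul_of_nonpos_left (mul_sum_mul_log_le_log_rpowMoment hw hw1 hz a)
            (inv_nonpos.mpr ha.le)
      _ = b⁻¹ * (b * L) := by field_simp
      _ ≤ b⁻¹ * log (rpowMoment s w z b) :=
          mul_le_mul_of_nonneg_left (mul_sum_mul_log_le_log_rpowMoment hw hw1 hz b)
            (inv_nonneg.mpr hb.le)
  · linarith
  · have hpow := mul_log_rpowMoment_le hw hw1 hz a (r := b / a) ((one_le_div ha).mpr hab)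
    rw [mul_div_cancel₀ b ha.ne'] at hpow
    calc a⁻¹ * log (rpowMoment s w z a) = b⁻¹ * (b / a * log (rpowMoment s w z a)) := by
          field_simp
      _ ≤ b⁻¹ * log (rpowMoment s w z b) := mul_le_mul_of_nonneg_left hpow (inv_nonneg.mpr hb.le)

end RpowMoment

theorem rpow_mul_rpow_one_sub {a b : ℝ} (ha : 0 < a) (hb : 0 < b) (γ : ℝ) :
    a ^ γ * b ^ (1 - γ) = a * (a / b) ^ (γ - 1) := by
  rw [div_rpow ha.le hb.le, rpow_sub_one ha.ne', show 1 - γ = -(γ - 1) by ring,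
    rpow_neg hb.le, rpow_sub_one hb.ne']
  field_simp

end Real

theorem sum_rpow_mul_rpow_one_sub_eq_rpowMoment {X : Type*} [Fintype X] {p q : X → ℝ}
    (hp0 : ∀ x, 0 ≤ p x) (hsupp : ∀ x, 0 < p x → 0 < q x) {γ : ℝ} (hγ : 0 < γ) :
    ∑ x, p x ^ γ * q x ^ (1 - γ) = rpowMoment {x | 0 < p x} p (p / q) (γ - 1) := by
  rw [rpowMoment, ← sum_filter_of_ne (p := fun x => 0 < p x)]
  · exact sum_congr rfl fun x hx =>
      rpow_mul_rpow_one_sub (mem_filter.mp hx).2 (hsupp x (mem_filter.mp hx).2) γ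
  · intro x _ hx
    refine (hp0 x).lt_of_ne' fun hpx => hx ?_
    rw [hpx, zero_rpow hγ.ne', zero_mul]

theorem renyiRelEntropy_mono_general {X : Type*} [Fintype X] (p q : X → ℝ)
    (hp0 : ∀ x, 0 ≤ p x) (hp1 : ∑ x, p x = 1)
    (hsupp : ∀ x, 0 < p x → 0 < q x)
    (α β : ℝ) (hα0 : 0 < α) (hα1 : α ≠ 1) (hβ0 : 0 < β) (hβ1 : β ≠ 1)
    (hαβ : α ≤ β) :
    renyiRelEntropy p q α ≤ renyiRelEntropy p q β := by
  have hw1 : ∑ x with 0 < p x, p x = 1 := by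
    rw [sum_filter_of_ne fun x _ hx => (hp0 x).lt_of_ne' hx, hp1]
  have hz : ∀ x ∈ ({x | 0 < p x} : Finset X), 0 < (p / q) x := fun x hx => by
    have hpx := (mem_filter.mp hx).2
    exact div_pos hpx (hsupp x hpx)
  unfold renyiRelEntropy
  rw [sum_rpow_mul_rpow_one_sub_eq_rpowMoment hp0 hsupp hα0,
    sum_rpow_mul_rpow_one_sub_eq_rpowMoment hp0 hsupp hβ0]
  exact inv_mul_log_rpowMoment_mono (fun x _ => hp0 x) hw1 hz (sub_ne_zero.mpr hα1)
    (sub_ne_zero.mpr hβ1) (by linarith)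

/-- For probability distributions `p, q` with `supp p ⊆ supp q`, the Rényi relative
entropy is monotonically nondecreasing in the order parameter on `(0,1) ∪ (1,∞)`. -/
theorem renyiRelEntropy_mono {X : Type*} [Fintype X] (p q : X → ℝ)
    (hp0 : ∀ x, 0 ≤ p x) (hp1 : ∑ x, p x = 1)
    (hq0 : ∀ x, 0 ≤ q x) (hq1 : ∑ x, q x = 1)
    (hsupp : ∀ x, 0 < p x → 0 < q x)
    (α β : ℝ) (hα0 : 0 < α) (hα1 : α ≠ 1) (hβ0 : 0 < β) (hβ1 : β ≠ 1)
    (hαβ : α ≤ β) :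
    renyiRelEntropy p q α ≤ renyiRelEntropy p q β :=
  renyiRelEntropy_mono_general p q hp0 hp1 hsupp α β hα0 hα1 hβ0 hβ1 hαβ
end

section
/- For a pure state ρ = |φ⟩⟨φ| with |φ⟩ = ∑_i a_i |i⟩ and p_i = |a_i|², the Rényi relative entropy of coherence satisfies C_{r,α}(ρ) = (α/(α−1))·ln(∑_i p_i^{1/α}) for all α > 0, α ≠ 1, where C_{r,α}(ρ) := min over diagonal density matrices σ of (1/(α−1))·ln tr(ρ^α σ^{1−α}). -/
open Matrix Finset

/-- Real power of a Hermitian matrix taken on its support (`0 ^ α = 0` for `α ≠ 0`),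
via the spectral decomposition. -/
noncomputable def mrpow {n : Type*} [Fintype n] [DecidableEq n]
    (ρ : Matrix n n ℂ) (hρ : ρ.IsHermitian) (α : ℝ) : Matrix n n ℂ :=
  (hρ.eigenvectorUnitary : Matrix n n ℂ) *
    Matrix.diagonal (fun i => ((hρ.eigenvalues i ^ α : ℝ) : ℂ)) *
    star (hρ.eigenvectorUnitary : Matrix n n ℂ)

/-! Since `ρ` is a rank-one projection, `ρ ^ α = ρ` and `tr (ρ ^ α σ ^ (1 - α)) = ∑ pᵢ qᵢ ^ (1 - α)`
for `σ = diag q`. With `zᵢ = pᵢ ^ (1/α) / qᵢ` this is the weighted mean `∑ qᵢ zᵢ ^ α`, while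
`∑ pᵢ ^ (1/α) = ∑ qᵢ zᵢ`, so Jensen's inequality for `t ↦ t ^ α` (convex for `α > 1`, concave for
`α < 1`) compares `(∑ pᵢ ^ (1/α)) ^ α` with `∑ pᵢ qᵢ ^ (1 - α)` in the direction that, after
multiplying by `(α - 1)⁻¹`, gives the lower bound. Equality holds at `qᵢ ∝ pᵢ ^ (1/α)`. -/

namespace Matrix

variable {n 𝕜 : Type*} [Fintype n] [RCLike 𝕜]

theorem mrpow_eq_cfc [DecidableEq n] {A : Matrix n n ℂ} (hA : A.IsHermitian) (α : ℝ) :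
    mrpow A hA α = cfc (· ^ α : ℝ → ℝ) A := by
  rw [hA.cfc_eq]; rfl

theorem mrpow_eq_self_of_isIdempotentElem [DecidableEq n] {A : Matrix n n ℂ} (hA : A.IsHermitian)
    (hidem : IsIdempotentElem A) {α : ℝ} (hα : α ≠ 0) : mrpow A hA α = A := by
  rw [mrpow_eq_cfc]
  conv_rhs => rw [← cfc_id' ℝ A]
  refine cfc_congr fun x hx => ?_
  rcases hidem.spectrum_subset ℝ hx with rfl | rfl <;> simp [hα]

theorem star_dotProduct_self_eq (v : n → 𝕜) : star v ⬝ᵥ v = ((∑ i, ‖v i‖ ^ 2 : ℝ) : 𝕜) := by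
  simp [dotProduct, RCLike.conj_mul]

theorem isIdempotentElem_vecMulVec_star {v : n → 𝕜} (hv : star v ⬝ᵥ v = 1) :
    IsIdempotentElem (vecMulVec v (star v)) := by
  rw [IsIdempotentElem, vecMulVec_mul_vecMulVec, hv, one_smul]

theorem trace_vecMulVec_star_mul_diagonal [DecidableEq n] (v : n → ℂ) (c : n → ℝ) :
    trace (vecMulVec v (star v) * diagonal (fun i => (c i : ℂ))) =
      ((∑ i, ‖v i‖ ^ 2 * c i : ℝ) : ℂ) := by
  simp [vecMulVec_mul, dotProduct, vecMul_diagonal, ← mul_assoc, Complex.mul_conj']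

end Matrix

section RenyiOptimization

open Real

variable {ι : Type*} [Fintype ι] {α : ℝ} {p q : ι → ℝ}

theorem mul_rpow_inv_rpow_one_sub {x : ℝ} (hx : 0 ≤ x) (hα : α ≠ 0) :
    x * (x ^ α⁻¹) ^ (1 - α) = x ^ α⁻¹ := by
  rcases hx.eq_or_lt with rfl | hx
  · simp [hα]
  rw [← rpow_mul hx.le, ← rpow_one_add' hx.le]
  · congr 1; field_simp; ring
  · field_simp; simpa

theorem sum_mul_rpow_one_sub_of_proportional (hp : ∀ i, 0 ≤ p i) (hα : α ≠ 0)
    (hS : 0 < ∑ i, p i ^ α⁻¹) :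
    ∑ i, p i * (p i ^ α⁻¹ / ∑ j, p j ^ α⁻¹) ^ (1 - α) = (∑ i, p i ^ α⁻¹) ^ α := by
  simp_rw [div_rpow (rpow_nonneg (hp _) _) hS.le, ← mul_div_assoc,
    mul_rpow_inv_rpow_one_sub (hp _) hα, ← sum_div]
  rw [← rpow_one_sub' hS.le (by simpa), sub_sub_cancel]

theorem sum_rpow_inv_eq_sum_mul_div (hq : ∀ i, p i ≠ 0 → q i ≠ 0) (hα : α ≠ 0) :
    ∑ i, p i ^ α⁻¹ = ∑ i, q i * (p i ^ α⁻¹ / q i) := by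
  refine sum_congr rfl fun i _ => ?_
  by_cases hpi : p i = 0
  · simp [hpi, hα]
  · rw [mul_div_cancel₀ _ (hq i hpi)]

theorem sum_mul_rpow_one_sub_eq_sum_mul_div_rpow (hp : ∀ i, 0 ≤ p i) (hq0 : ∀ i, 0 ≤ q i)
    (hq : ∀ i, p i ≠ 0 → q i ≠ 0) (hα : α ≠ 0) :
    ∑ i, p i * q i ^ (1 - α) = ∑ i, q i * (p i ^ α⁻¹ / q i) ^ α := by
  refine sum_congr rfl fun i _ => ?_
  by_cases hpi : p i = 0
  · simp [hpi, hα]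
  have hqi : 0 < q i := (hq0 i).lt_of_ne' (hq i hpi)
  rw [div_rpow (rpow_nonneg (hp i) _) hqi.le, rpow_inv_rpow (hp i) hα, rpow_sub hqi, rpow_one]
  ring

theorem rpow_sum_rpow_inv_le_sum_mul_rpow_one_sub (hp : ∀ i, 0 ≤ p i) (hq0 : ∀ i, 0 ≤ q i)
    (hq1 : ∑ i, q i = 1) (hq : ∀ i, p i ≠ 0 → q i ≠ 0) (hα : 1 ≤ α) :
    (∑ i, p i ^ α⁻¹) ^ α ≤ ∑ i, p i * q i ^ (1 - α) := by
  rw [sum_rpow_inv_eq_sum_mul_div hq (by positivity),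
    sum_mul_rpow_one_sub_eq_sum_mul_div_rpow hp hq0 hq (by positivity)]
  exact rpow_arith_mean_le_arith_mean_rpow univ q _ (fun i _ => hq0 i) hq1
    (fun i _ => div_nonneg (rpow_nonneg (hp i) _) (hq0 i)) hα

theorem sum_mul_rpow_one_sub_le_rpow_sum_rpow_inv (hp : ∀ i, 0 ≤ p i) (hq0 : ∀ i, 0 ≤ q i)
    (hq1 : ∑ i, q i = 1) (hq : ∀ i, p i ≠ 0 → q i ≠ 0) (hα0 : 0 < α) (hα1 : α ≤ 1) :
    ∑ i, p i * q i ^ (1 - α) ≤ (∑ i, p i ^ α⁻¹) ^ α := by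
  rw [sum_rpow_inv_eq_sum_mul_div hq hα0.ne',
    sum_mul_rpow_one_sub_eq_sum_mul_div_rpow hp hq0 hq hα0.ne']
  exact (concaveOn_rpow hα0.le hα1).le_map_sum (fun i _ => hq0 i) hq1
    (fun i _ => div_nonneg (rpow_nonneg (hp i) _) (hq0 i))

theorem sum_rpow_pos (hp : ∀ i, 0 ≤ p i) (hp' : p ≠ 0) (r : ℝ) : 0 < ∑ i, p i ^ r := by
  obtain ⟨i, hi⟩ := Function.ne_iff.1 hp'
  exact sum_pos' (fun j _ => rpow_nonneg (hp j) r)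
    ⟨i, mem_univ i, rpow_pos_of_pos ((hp i).lt_of_ne' hi) r⟩

theorem div_sub_one_mul_log_sum_rpow_inv_le (hp : ∀ i, 0 ≤ p i) (hp' : p ≠ 0)
    (hq0 : ∀ i, 0 ≤ q i) (hq1 : ∑ i, q i = 1) (hq : ∀ i, p i ≠ 0 → q i ≠ 0)
    (hα0 : 0 < α) (hα1 : α ≠ 1) :
    α / (α - 1) * log (∑ i, p i ^ α⁻¹) ≤ (α - 1)⁻¹ * log (∑ i, p i * q i ^ (1 - α)) := by
  obtain ⟨i, hi⟩ := Function.ne_iff.1 hp'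
  have hT : 0 < ∑ i, p i * q i ^ (1 - α) :=
    sum_pos' (fun j _ => mul_nonneg (hp j) (rpow_nonneg (hq0 j) _))
      ⟨i, mem_univ i,
        mul_pos ((hp i).lt_of_ne' hi) (rpow_pos_of_pos ((hq0 i).lt_of_ne' (hq i hi)) _)⟩
  have hS := sum_rpow_pos hp hp' α⁻¹
  rw [div_eq_inv_mul, mul_assoc, ← log_rpow hS]
  rcases hα1.lt_or_gt with hlt | hgt
  · exact mul_le_mul_of_nonpos_left
      (log_le_log hT (sum_mul_rpow_one_sub_le_rpow_sum_rpow_inv hp hq0 hq1 hq hα0 hlt.le))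
      (inv_nonpos.2 (by linarith))
  · exact mul_le_mul_of_nonneg_left
      (log_le_log (rpow_pos_of_pos hS α)
        (rpow_sum_rpow_inv_le_sum_mul_rpow_one_sub hp hq0 hq1 hq hgt.le))
      (inv_nonneg.2 (by linarith))

theorem isLeast_log_sum_mul_rpow_one_sub (hp : ∀ i, 0 ≤ p i) (hp' : p ≠ 0) (hα0 : 0 < α)
    (hα1 : α ≠ 1) :
    IsLeast {v : ℝ | ∃ q : ι → ℝ, (∀ i, 0 ≤ q i) ∧ (∑ i, q i = 1) ∧
        (∀ i, p i ≠ 0 → q i ≠ 0) ∧ v = (α - 1)⁻¹ * log (∑ i, p i * q i ^ (1 - α))}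
      (α / (α - 1) * log (∑ i, p i ^ α⁻¹)) := by
  have hS := sum_rpow_pos hp hp' α⁻¹
  refine ⟨⟨fun i => p i ^ α⁻¹ / ∑ j, p j ^ α⁻¹, fun i => div_nonneg (rpow_nonneg (hp i) _) hS.le,
    by rw [← sum_div, div_self hS.ne'],
    fun i hi => (div_pos (rpow_pos_of_pos ((hp i).lt_of_ne' hi) _) hS).ne', ?_⟩, ?_⟩
  · rw [sum_mul_rpow_one_sub_of_proportional hp hα0.ne' hS, log_rpow hS, div_eq_inv_mul, mul_assoc]
  · rintro _ ⟨q, hq0, hq1, hq, rfl⟩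
    exact div_sub_one_mul_log_sum_rpow_inv_le hp hp' hq0 hq1 hq hα0 hα1

end RenyiOptimization

/-- For a pure state `ρ = |φ⟩⟨φ|` with `|φ⟩ = ∑ᵢ aᵢ|i⟩` and `pᵢ = |aᵢ|²`, the Rényi
relative entropy of coherence, i.e. the minimum of `(α−1)⁻¹ ln tr(ρ^α σ^{1−α})` over
diagonal density matrices `σ` (whose support contains that of `ρ`), equals
`(α/(α−1)) ln ∑ᵢ pᵢ^{1/α}` for every `α > 0`, `α ≠ 1`. -/
theorem renyiCoherence_pure {d : ℕ} (a : Fin d → ℂ)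
    (ha : ∑ i, ‖a i‖ ^ 2 = 1)
    (p : Fin d → ℝ) (hp : ∀ i, p i = ‖a i‖ ^ 2)
    (ρ : Matrix (Fin d) (Fin d) ℂ) (hρdef : ρ = Matrix.vecMulVec a (star a))
    (hρ : ρ.IsHermitian)
    (α : ℝ) (hα0 : 0 < α) (hα1 : α ≠ 1) :
    IsLeast
      {v : ℝ | ∃ q : Fin d → ℝ, (∀ i, 0 ≤ q i) ∧ (∑ i, q i = 1) ∧
        (∀ i, p i ≠ 0 → q i ≠ 0) ∧
        v = (α - 1)⁻¹ *
          Real.log (Matrix.trace (mrpow ρ hρ α *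
            Matrix.diagonal (fun i => ((q i ^ (1 - α) : ℝ) : ℂ)))).re}
      ((α / (α - 1)) * Real.log (∑ i, p i ^ α⁻¹)) := by
  subst hρdef
  have hp0 : ∀ i, 0 ≤ p i := fun i => hp i ▸ sq_nonneg _
  have hp1 : ∑ i, p i = 1 := by simpa only [hp] using ha
  have hidem : IsIdempotentElem (vecMulVec a (star a)) :=
    isIdempotentElem_vecMulVec_star (by rw [star_dotProduct_self_eq, ha, RCLike.ofReal_one])
  have htrace (q : Fin d → ℝ) :
      (trace (mrpow _ hρ α * diagonal fun i => ((q i ^ (1 - α) : ℝ) : ℂ))).re =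
        ∑ i, p i * q i ^ (1 - α) := by
    rw [mrpow_eq_self_of_isIdempotentElem hρ hidem hα0.ne', trace_vecMulVec_star_mul_diagonal,
      Complex.ofReal_re]
    simp only [hp]
  simp only [htrace]
  exact isLeast_log_sum_mul_rpow_one_sub hp0 (fun h => by simp [h] at hp1) hα0 hα1
end

section
/- For any density matrix ρ on ℂ^d, the relative entropy of coherence C_r(ρ) := min over diagonal density matrices σ of S(ρ‖σ) equals S(ρ^{diag}) − S(ρ), where ρ^{diag} is the diagonal part of ρ, S is von Neumann entropy, and S(ρ‖σ) := tr(ρ ln ρ) − tr(ρ ln σ). -/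
/-!
For a diagonal `σ = diag q`, the term `tr(ρ ln σ) = ∑ⱼ ρⱼⱼ ln qⱼ` only sees the diagonal of `ρ`,
which is a probability vector, while `tr(ρ ln ρ)` does not depend on `σ`. Minimising `S(ρ‖σ)`
is therefore maximising the cross term `∑ⱼ ρⱼⱼ ln qⱼ`, and by Gibbs' inequality the maximum is
attained at `q = ρ^diag`.
-/

open Matrix Finset ComplexOrder

namespace Real

lemma mul_log_sub_mul_log_le_sub {p q : ℝ} (hp : 0 ≤ p) (hq : 0 ≤ q) (hpq : p ≠ 0 → q ≠ 0) :
    p * log q - p * log p ≤ q - p := by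
  rcases hp.eq_or_lt with rfl | hp
  · simpa using hq
  have hq : 0 < q := hq.lt_of_ne (hpq hp.ne').symm
  calc p * log q - p * log p = p * log (q / p) := by rw [log_div hq.ne' hp.ne']; ring
    _ ≤ p * (q / p - 1) := by gcongr; exact log_le_sub_one_of_pos (div_pos hq hp)
    _ = q - p := by field_simp

/-- Gibbs' inequality. -/
lemma sum_mul_log_le_sum_mul_log {ι : Type*} [Fintype ι] {p q : ι → ℝ}
    (hp : ∀ i, 0 ≤ p i) (hq : ∀ i, 0 ≤ q i) (hpq : ∀ i, p i ≠ 0 → q i ≠ 0)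
    (hsum : ∑ i, q i ≤ ∑ i, p i) :
    ∑ i, p i * log (q i) ≤ ∑ i, p i * log (p i) := by
  have h := Finset.sum_le_sum fun i (_ : i ∈ univ) =>
    mul_log_sub_mul_log_le_sub (hp i) (hq i) (hpq i)
  rw [Finset.sum_sub_distrib, Finset.sum_sub_distrib] at h
  linarith

end Real

namespace Matrix

variable {n : Type*} {ρ : Matrix n n ℂ}

lemma PosSemidef.re_diag_nonneg (hρ : ρ.PosSemidef) (i : n) : 0 ≤ (ρ i i).re :=
  (Complex.le_def.mp hρ.diag_nonneg).1

lemma sum_re_diag_eq_one_of_trace_eq_one [Fintype n] (htr : ρ.trace = 1) :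
    ∑ i, (ρ i i).re = 1 := by
  simpa [trace, Complex.re_sum] using congrArg Complex.re htr

end Matrix

/-- The relative entropy of coherence: the minimum over diagonal density matrices `σ`
(with support containing that of `ρ`, otherwise the relative entropy is `+∞`) of
`S(ρ‖σ) = tr(ρ ln ρ) − tr(ρ ln σ)` equals `S(ρ^diag) − S(ρ)`, where `S` is the
von Neumann entropy and logarithms are taken on the support. -/
theorem relEntropyCoherence_eq {d : ℕ}
    (ρ : Matrix (Fin d) (Fin d) ℂ) (hρ : ρ.PosSemidef) (htr : ρ.trace = 1) :
    IsLeast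
      {v : ℝ | ∃ q : Fin d → ℝ, (∀ i, 0 ≤ q i) ∧ (∑ i, q i = 1) ∧
        (∀ i, (ρ i i).re ≠ 0 → q i ≠ 0) ∧
        v = (∑ i, hρ.1.eigenvalues i * Real.log (hρ.1.eigenvalues i))
            - ∑ j, (ρ j j).re * Real.log (q j)}
      ((- ∑ j, (ρ j j).re * Real.log (ρ j j).re)
        - (- ∑ i, hρ.1.eigenvalues i * Real.log (hρ.1.eigenvalues i))) := by
  have hsum := sum_re_diag_eq_one_of_trace_eq_one htr
  refine ⟨⟨fun j => (ρ j j).re, hρ.re_diag_nonneg, hsum, fun _ h => h, by ring⟩, ?_⟩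
  rintro v ⟨q, hq, hq_sum, hsupp, rfl⟩
  have hgibbs :=
    Real.sum_mul_log_le_sum_mul_log hρ.re_diag_nonneg hq hsupp (hq_sum.trans hsum.symm).le
  linarith
end

section
/- For any density matrix ρ on ℂ^d supported on a subspace spanned by r of the reference basis vectors, the robustness of coherence C_R(ρ) := min{x ≥ 0 : ∃ density matrix τ with (ρ + xτ)/(1+x) diagonal} satisfies C_{l₁}(ρ)/(r−1) ≤ C_R(ρ) ≤ C_{l₁}(ρ), where C_{l₁}(ρ) = ∑_{j≠k}|ρ_{jk}| (assuming r ≥ 2 and ρ not diagonal for the lower bound). -/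
open Matrix Finset ComplexOrder

/-!
Upper bound: with `D` the diagonal matrix of off-diagonal absolute row sums of `ρ`, the matrix
`M = D - (ρ - diag ρ)` is Hermitian and diagonally dominant, hence positive semidefinite by
Gershgorin, and has trace `C_{l₁}(ρ)`; so `τ = M / C_{l₁}(ρ)` makes `ρ + C_{l₁}(ρ) τ` diagonal.

Lower bound: if `ρ + x τ` is diagonal then `|ρ_{jk}| = x |τ_{jk}|` off the diagonal, and positive
semidefiniteness of `τ` gives `2 |τ_{jk}| ≤ τ_{jj} + τ_{kk}`; summing over the `r × r` block that
carries the off-diagonal part of `ρ` gives `C_{l₁}(ρ) ≤ x (r - 1) tr τ = x (r - 1)`.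
-/

/-- The `l₁`-norm of coherence `C_{l₁}(ρ) = ∑_{j≠k} |ρ_{jk}|`. -/
noncomputable def l1Coherence {d : ℕ} (ρ : Matrix (Fin d) (Fin d) ℂ) : ℝ :=
  ∑ j, ∑ k ∈ Finset.univ \ {j}, ‖ρ j k‖

/-- The robustness of coherence
`C_R(ρ) = min {x ≥ 0 | ∃ density matrix τ, (ρ + xτ)/(1+x) is diagonal}`. -/
noncomputable def robustnessCoherence {d : ℕ} (ρ : Matrix (Fin d) (Fin d) ℂ) : ℝ :=
  sInf {x : ℝ | 0 ≤ x ∧ ∃ τ : Matrix (Fin d) (Fin d) ℂ, τ.PosSemidef ∧ τ.trace = 1 ∧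
    ∀ j k, j ≠ k → (((1 + x : ℝ) : ℂ)⁻¹ • (ρ + (x : ℂ) • τ)) j k = 0}

theorem Finset.sum_sum_erase_add {ι R : Type*} [DecidableEq ι] [CommRing R] (s : Finset ι)
    (f : ι → R) : ∑ i ∈ s, ∑ j ∈ s.erase i, (f i + f j) = 2 * (#s - 1) * ∑ i ∈ s, f i := by
  have hcard : ∀ i ∈ s, ((#(s.erase i) : ℕ) : R) = #s - 1 := fun i hi => by
    rw [card_erase_of_mem hi, Nat.cast_sub (one_le_card.mpr ⟨i, hi⟩), Nat.cast_one]
  calc ∑ i ∈ s, ∑ j ∈ s.erase i, (f i + f j)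
      = ∑ i ∈ s, ((#s - 1) * f i + (∑ j ∈ s, f j - f i)) := by
        refine sum_congr rfl fun i hi => ?_
        rw [sum_add_distrib, sum_const, nsmul_eq_mul, hcard i hi, sum_erase_eq_sub hi]
    _ = 2 * (#s - 1) * ∑ i ∈ s, f i := by
        rw [sum_add_distrib, sum_sub_distrib, sum_const, nsmul_eq_mul, ← mul_sum]
        ring

namespace Matrix

variable {n 𝕜 : Type*} [RCLike 𝕜] {A : Matrix n n 𝕜}

theorem PosSemidef.re_apply_self_nonneg (hA : A.PosSemidef) (i : n) :
    0 ≤ RCLike.re (A i i) :=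
  (RCLike.nonneg_iff.mp hA.diag_nonneg).1

theorem PosSemidef.norm_apply_sq_le (hA : A.PosSemidef) (i j : n) :
    ‖A i j‖ ^ 2 ≤ RCLike.re (A i i) * RCLike.re (A j j) := by
  classical
  have hdet := (hA.submatrix ![i, j]).det_nonneg
  simp only [det_fin_two, submatrix_apply, cons_val_zero, cons_val_one] at hdet
  rw [← hA.1.apply j i, ← hA.1.coe_re_apply_self i, ← hA.1.coe_re_apply_self j,
    RCLike.star_def, RCLike.mul_conj] at hdet
  exact_mod_cast sub_nonneg.mp hdet

theorem PosSemidef.two_mul_norm_apply_le (hA : A.PosSemidef) (i j : n) :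
    2 * ‖A i j‖ ≤ RCLike.re (A i i) + RCLike.re (A j j) := by
  have hi := hA.re_apply_self_nonneg i
  have hj := hA.re_apply_self_nonneg j
  nlinarith [hA.norm_apply_sq_le i j, norm_nonneg (A i j),
    sq_nonneg (RCLike.re (A i i) - RCLike.re (A j j))]

theorem PosSemidef.sum_sum_erase_norm_le [DecidableEq n] (hA : A.PosSemidef) (s : Finset n) :
    ∑ i ∈ s, ∑ j ∈ s.erase i, ‖A i j‖ ≤ (#s - 1) * ∑ i ∈ s, RCLike.re (A i i) := by
  have h := sum_le_sum fun i (_ : i ∈ s) => sum_le_sum fun j (_ : j ∈ s.erase i) =>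
    hA.two_mul_norm_apply_le i j
  rw [sum_sum_erase_add] at h
  simp only [← mul_sum] at h
  linarith

/-- By Gershgorin, every eigenvalue lies within an off-diagonal row sum of a diagonal entry. -/
theorem IsHermitian.posSemidef_of_sum_norm_le [Fintype n] [DecidableEq n] (hA : A.IsHermitian)
    (h : ∀ i, ∑ j ∈ univ.erase i, ‖A i j‖ ≤ RCLike.re (A i i)) : A.PosSemidef := by
  rw [hA.posSemidef_iff_eigenvalues_nonneg]
  intro i
  rw [Pi.zero_apply]
  have hev : Module.End.HasEigenvalue (toLin' A) (hA.eigenvalues i : 𝕜) := by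
    refine Module.End.hasEigenvalue_of_hasEigenvector (x := ⇑(hA.eigenvectorBasis i)) ⟨?_, ?_⟩
    · rw [Module.End.mem_eigenspace_iff, toLin'_apply, hA.mulVec_eigenvectorBasis,
        RCLike.real_smul_eq_coe_smul (K := 𝕜)]
    · exact fun h0 => hA.eigenvectorBasis.orthonormal.ne_zero i
        (by simpa using congrArg (WithLp.toLp 2) h0)
  obtain ⟨k, hk⟩ := eigenvalue_mem_ball hev
  rw [Metric.mem_closedBall, dist_comm, dist_eq_norm] at hk
  have hre := RCLike.re_le_norm (A k k - hA.eigenvalues i)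
  rw [map_sub, RCLike.ofReal_re] at hre
  linarith [h k]

end Matrix

section Compensator

variable {n 𝕜 : Type*} [Fintype n] [DecidableEq n] [RCLike 𝕜]

/-- The matrix `M` of the upper bound: normalised by its trace `C_{l₁}(ρ)`, it is the density
matrix witnessing `C_R(ρ) ≤ C_{l₁}(ρ)`. -/
noncomputable def l1Compensator (ρ : Matrix n n 𝕜) : Matrix n n 𝕜 :=
  of fun j k => if j = k then ((∑ k' ∈ univ.erase j, ‖ρ j k'‖ : ℝ) : 𝕜) else -ρ j k

theorem l1Compensator_apply_self (ρ : Matrix n n 𝕜) (j : n) :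
    l1Compensator ρ j j = ((∑ k ∈ univ.erase j, ‖ρ j k‖ : ℝ) : 𝕜) :=
  if_pos rfl

theorem l1Compensator_apply_of_ne (ρ : Matrix n n 𝕜) {j k : n} (hjk : j ≠ k) :
    l1Compensator ρ j k = -ρ j k :=
  if_neg hjk

theorem isHermitian_l1Compensator {ρ : Matrix n n 𝕜} (hρ : ρ.IsHermitian) :
    (l1Compensator ρ).IsHermitian := by
  ext j k
  rw [conjTranspose_apply]
  rcases eq_or_ne j k with rfl | hjk
  · rw [l1Compensator_apply_self, RCLike.star_def, RCLike.conj_ofReal]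
  · rw [l1Compensator_apply_of_ne _ hjk, l1Compensator_apply_of_ne _ hjk.symm, star_neg,
      hρ.apply]

theorem posSemidef_l1Compensator {ρ : Matrix n n 𝕜} (hρ : ρ.IsHermitian) :
    (l1Compensator ρ).PosSemidef := by
  refine (isHermitian_l1Compensator hρ).posSemidef_of_sum_norm_le fun j => le_of_eq ?_
  rw [l1Compensator_apply_self, RCLike.ofReal_re]
  exact sum_congr rfl fun k hk => by
    rw [l1Compensator_apply_of_ne _ (ne_of_mem_erase hk).symm, norm_neg]

end Compensator

section Coherence

variable {d : ℕ} {ρ : Matrix (Fin d) (Fin d) ℂ}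

theorem l1Coherence_eq_sum_erase (ρ : Matrix (Fin d) (Fin d) ℂ) :
    l1Coherence ρ = ∑ j, ∑ k ∈ univ.erase j, ‖ρ j k‖ := by
  simp only [l1Coherence, sdiff_singleton_eq_erase]

theorem l1Coherence_pos (h : ∃ j k, j ≠ k ∧ ρ j k ≠ 0) : 0 < l1Coherence ρ := by
  obtain ⟨j, k, hjk, hρjk⟩ := h
  rw [l1Coherence_eq_sum_erase]
  refine sum_pos' (fun _ _ => sum_nonneg fun _ _ => norm_nonneg _) ⟨j, mem_univ j, ?_⟩
  exact sum_pos' (fun _ _ => norm_nonneg _)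
    ⟨k, mem_erase.mpr ⟨hjk.symm, mem_univ k⟩, norm_pos_iff.mpr hρjk⟩

theorem l1Coherence_eq_sum_of_support {s : Finset (Fin d)}
    (hsupp : ∀ j k, (j ∉ s ∨ k ∉ s) → ρ j k = 0) :
    l1Coherence ρ = ∑ j ∈ s, ∑ k ∈ s.erase j, ‖ρ j k‖ := by
  rw [l1Coherence_eq_sum_erase]
  symm
  refine sum_subset_zero_on_sdiff (subset_univ s)
    (fun j hj => sum_eq_zero fun k _ => by
      rw [hsupp j k (Or.inl (mem_sdiff.mp hj).2), norm_zero])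
    fun j _ => sum_subset (erase_subset_erase j (subset_univ s)) fun k hk hks => ?_
  have hk_notin : k ∉ s := fun h => hks (mem_erase.mpr ⟨ne_of_mem_erase hk, h⟩)
  rw [hsupp j k (Or.inr hk_notin), norm_zero]

theorem trace_l1Compensator (ρ : Matrix (Fin d) (Fin d) ℂ) :
    (l1Compensator ρ).trace = l1Coherence ρ := by
  simp only [trace, diag_apply, l1Compensator_apply_self, l1Coherence_eq_sum_erase]
  push_cast
  rfl

/-- The admissible `x` in `robustnessCoherence`, with the normalisation `1 / (1 + x)` removed. -/
def robustnessAdmissible (ρ : Matrix (Fin d) (Fin d) ℂ) : Set ℝ :=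
  {x | 0 ≤ x ∧ ∃ τ : Matrix (Fin d) (Fin d) ℂ, τ.PosSemidef ∧ τ.trace = 1 ∧
    ∀ j k, j ≠ k → ρ j k + x * τ j k = 0}

theorem robustnessCoherence_eq_sInf (ρ : Matrix (Fin d) (Fin d) ℂ) :
    robustnessCoherence ρ = sInf (robustnessAdmissible ρ) := by
  refine congrArg sInf (Set.ext fun x => and_congr_right fun hx => exists_congr fun τ =>
    and_congr_right' (and_congr_right' (forall₂_congr fun j k => imp_congr_right fun _ => ?_)))
  have h1x : (1 + x : ℂ) ≠ 0 := by exact_mod_cast (by linarith : (0 : ℝ) < 1 + x).ne'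
  simp [h1x]

theorem l1Coherence_mem_robustnessAdmissible (hρ : ρ.IsHermitian) (hL : 0 < l1Coherence ρ) :
    l1Coherence ρ ∈ robustnessAdmissible ρ := by
  refine ⟨hL.le, (l1Coherence ρ)⁻¹ • l1Compensator ρ,
    (posSemidef_l1Compensator hρ).smul (inv_nonneg.mpr hL.le), ?_, fun j k hjk => ?_⟩
  · rw [trace_smul, trace_l1Compensator, Complex.real_smul, ← Complex.ofReal_mul,
      inv_mul_cancel₀ hL.ne', Complex.ofReal_one]
  · rw [Matrix.smul_apply, l1Compensator_apply_of_ne _ hjk, Complex.real_smul, ← mul_assoc,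
      ← Complex.ofReal_mul, mul_inv_cancel₀ hL.ne', Complex.ofReal_one, one_mul, add_neg_cancel]

theorem robustnessCoherence_le_l1Coherence (hρ : ρ.IsHermitian)
    (h : ∃ j k, j ≠ k ∧ ρ j k ≠ 0) : robustnessCoherence ρ ≤ l1Coherence ρ := by
  rw [robustnessCoherence_eq_sInf]
  exact csInf_le ⟨0, fun _ hx => hx.1⟩
    (l1Coherence_mem_robustnessAdmissible hρ (l1Coherence_pos h))

theorem l1Coherence_le_mul_of_mem {s : Finset (Fin d)} {x : ℝ}
    (hsupp : ∀ j k, (j ∉ s ∨ k ∉ s) → ρ j k = 0) (hs : s.Nonempty)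
    (hx : x ∈ robustnessAdmissible ρ) : l1Coherence ρ ≤ x * (#s - 1) := by
  obtain ⟨hx0, τ, hτ, htr, hdiag⟩ := hx
  have hnorm : ∀ j k, j ≠ k → ‖ρ j k‖ = x * ‖τ j k‖ := fun j k hjk => by
    rw [eq_neg_of_add_eq_zero_left (hdiag j k hjk), norm_neg, norm_mul, Complex.norm_real,
      Real.norm_of_nonneg hx0]
  have htrace : ∑ j ∈ s, RCLike.re (τ j j) ≤ 1 :=
    calc ∑ j ∈ s, RCLike.re (τ j j) ≤ ∑ j, RCLike.re (τ j j) :=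
          sum_le_sum_of_subset_of_nonneg (subset_univ s) fun j _ _ => hτ.re_apply_self_nonneg j
      _ = 1 := by rw [← map_sum]; exact (congrArg RCLike.re htr).trans RCLike.one_re
  have hcard : (0 : ℝ) ≤ #s - 1 := sub_nonneg.mpr (by exact_mod_cast hs.card_pos)
  calc l1Coherence ρ = ∑ j ∈ s, ∑ k ∈ s.erase j, ‖ρ j k‖ := l1Coherence_eq_sum_of_support hsupp
    _ = x * ∑ j ∈ s, ∑ k ∈ s.erase j, ‖τ j k‖ := by
        simp only [mul_sum]
        exact sum_congr rfl fun j _ => sum_congr rfl fun k hk =>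
          hnorm j k (ne_of_mem_erase hk).symm
    _ ≤ x * ((#s - 1) * ∑ j ∈ s, RCLike.re (τ j j)) := by
        gcongr
        exact hτ.sum_sum_erase_norm_le s
    _ ≤ x * (#s - 1) := by
        gcongr
        exact mul_le_of_le_one_right hcard htrace

theorem l1Coherence_div_le_robustnessCoherence (hρ : ρ.IsHermitian)
    (h : ∃ j k, j ≠ k ∧ ρ j k ≠ 0) {s : Finset (Fin d)} (hs : 2 ≤ #s)
    (hsupp : ∀ j k, (j ∉ s ∨ k ∉ s) → ρ j k = 0) :
    l1Coherence ρ / (#s - 1) ≤ robustnessCoherence ρ := by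
  have hs1 : (0 : ℝ) < #s - 1 := by
    have : (2 : ℝ) ≤ #s := by exact_mod_cast hs
    linarith
  rw [robustnessCoherence_eq_sInf]
  refine le_csInf ⟨_, l1Coherence_mem_robustnessAdmissible hρ (l1Coherence_pos h)⟩ fun x hx => ?_
  rw [div_le_iff₀ hs1]
  exact l1Coherence_le_mul_of_mem hsupp (card_pos.mp (by omega)) hx

end Coherence

theorem robustness_coherence_bounds_general {d : ℕ}
    (ρ : Matrix (Fin d) (Fin d) ℂ) (hρ : ρ.PosSemidef)
    (r : ℕ) (hr : 2 ≤ r) (s : Finset (Fin d)) (hs : s.card = r)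
    (hsupp : ∀ j k, (j ∉ s ∨ k ∉ s) → ρ j k = 0)
    (hnd : ∃ j k, j ≠ k ∧ ρ j k ≠ 0) :
    l1Coherence ρ / (r - 1 : ℝ) ≤ robustnessCoherence ρ ∧
    robustnessCoherence ρ ≤ l1Coherence ρ := by
  subst hs
  exact ⟨l1Coherence_div_le_robustnessCoherence hρ.isHermitian hnd hr hsupp,
    robustnessCoherence_le_l1Coherence hρ.isHermitian hnd⟩

/-- For a density matrix `ρ` supported on a subspace spanned by `r ≥ 2` reference
basis vectors (and not diagonal for the lower bound), the robustness of coherence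
satisfies `C_{l₁}(ρ)/(r−1) ≤ C_R(ρ) ≤ C_{l₁}(ρ)`. -/
theorem robustness_coherence_bounds {d : ℕ}
    (ρ : Matrix (Fin d) (Fin d) ℂ) (hρ : ρ.PosSemidef) (htr : ρ.trace = 1)
    (r : ℕ) (hr : 2 ≤ r) (s : Finset (Fin d)) (hs : s.card = r)
    (hsupp : ∀ j k, (j ∉ s ∨ k ∉ s) → ρ j k = 0)
    (hnd : ∃ j k, j ≠ k ∧ ρ j k ≠ 0) :
    l1Coherence ρ / (r - 1 : ℝ) ≤ robustnessCoherence ρ ∧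
    robustnessCoherence ρ ≤ l1Coherence ρ :=
  robustness_coherence_bounds_general ρ hρ r hr s hs hsupp hnd
end

section
/- Let ρ be a density matrix on ℂ^d that commutes with its diagonal part ρ^{diag} and satisfies Π_ρ ρ^{diag} = c·ρ for some constant c > 0, where Π_ρ is the projector onto the support of ρ. Then for every α ∈ (0,∞), α ≠ 1, the Rényi relative entropy of coherence C_{r,α}(ρ) := (1/(α−1))·ln ‖(ρ^α)^{diag}‖_{1/α} equals −ln c. -/
/-!
Write `ρ = U diag(λ) U*`. Conjugating `Π_ρ ρ^diag = c ρ` by `U*` shows that `ρ_jj = c λ_i`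
whenever `U_ji ≠ 0` and `λ_i ≠ 0`: row `j` of `U` only sees the eigenvalue `ρ_jj / c` (and `0`).
Hence `(ρ^α)_jj = (ρ_jj / c)^α (Π_ρ)_jj`, and the diagonal of the hypothesis gives `(Π_ρ)_jj = c`
wherever `ρ_jj ≠ 0`, so `(ρ^α)_jj = c^(1-α) ρ_jj^α`. Since `tr ρ = 1`, this makes
`‖(ρ^α)^diag‖_{1/α} = c^(1-α)`.
-/

open Matrix Finset ComplexOrder

/-- The orthogonal projector onto the support (range) of a Hermitian matrix. -/
noncomputable def suppProj {n : Type*} [Fintype n] [DecidableEq n]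
    (ρ : Matrix n n ℂ) (hρ : ρ.IsHermitian) : Matrix n n ℂ :=
  (hρ.eigenvectorUnitary : Matrix n n ℂ) *
    Matrix.diagonal (fun i => if hρ.eigenvalues i = 0 then (0 : ℂ) else 1) *
    star (hρ.eigenvectorUnitary : Matrix n n ℂ)

lemma mul_diagonal_mul_star_apply_self {n : Type*} [Fintype n] [DecidableEq n]
    (U : Matrix n n ℂ) (g : n → ℂ) (j : n) :
    (U * diagonal g * star U) j j = ∑ i, g i * Complex.normSq (U j i) := by
  rw [mul_apply]
  refine sum_congr rfl fun i _ => ?_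
  rw [mul_diagonal, star_apply, RCLike.star_def, mul_comm (U j i), mul_assoc, Complex.mul_conj]

lemma sum_rpow_mul_eq_of_support_relation {ι : Type*} [Fintype ι] {e w : ι → ℝ} {p c α : ℝ}
    (hp : 0 ≤ p) (hc : 0 < c) (hα : 0 < α)
    (hrel : ∀ i, w i ≠ 0 → (if e i = 0 then 0 else 1) * p = c * e i)
    (hdiag : (∑ i, (if e i = 0 then 0 else 1) * w i) * p = c * p) :
    ∑ i, e i ^ α * w i = c ^ (1 - α) * p ^ α := by
  have hterm : ∀ i, e i ^ α * w i = (p / c) ^ α * ((if e i = 0 then 0 else 1) * w i) := by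
    intro i
    by_cases hw : w i = 0
    · simp [hw]
    by_cases he : e i = 0
    · simp [he, Real.zero_rpow hα.ne']
    have hpe : p = c * e i := by simpa [he] using hrel i hw
    rw [if_neg he, one_mul, hpe, mul_div_cancel_left₀ _ hc.ne']
  rw [sum_congr rfl fun i _ => hterm i, ← mul_sum]
  rcases hp.eq_or_lt with rfl | hp
  · simp [Real.zero_rpow hα.ne']
  · rw [mul_right_cancel₀ hp.ne' hdiag, Real.div_rpow hp.le hc.le, Real.rpow_sub hc,
      Real.rpow_one]
    field_simp

lemma sum_rpow_inv_rpow_eq {ι : Type*} [Fintype ι] {x p : ι → ℝ} {k α : ℝ}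
    (hk : 0 ≤ k) (hα : α ≠ 0) (hp : ∀ j, 0 ≤ p j) (hsum : ∑ j, p j = 1)
    (hx : ∀ j, x j = k * p j ^ α) :
    (∑ j, x j ^ α⁻¹) ^ α = k := by
  have hterm : ∀ j, x j ^ α⁻¹ = k ^ α⁻¹ * p j := fun j => by
    rw [hx, Real.mul_rpow hk (Real.rpow_nonneg (hp j) _), Real.rpow_rpow_inv (hp j) hα]
  rw [sum_congr rfl fun j _ => hterm j, ← mul_sum, hsum, mul_one, Real.rpow_inv_rpow hk hα]

namespace Matrix.IsHermitian

variable {n : Type*} [Fintype n] [DecidableEq n] {ρ : Matrix n n ℂ} (hρ : ρ.IsHermitian)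

lemma star_eigenvectorUnitary_mul :
    star (hρ.eigenvectorUnitary : Matrix n n ℂ) * ρ
      = diagonal (fun i => (hρ.eigenvalues i : ℂ)) *
          star (hρ.eigenvectorUnitary : Matrix n n ℂ) := by
  calc star (hρ.eigenvectorUnitary : Matrix n n ℂ) * ρ
      = star (hρ.eigenvectorUnitary : Matrix n n ℂ) *
          ((hρ.eigenvectorUnitary : Matrix n n ℂ) * diagonal (fun i => (hρ.eigenvalues i : ℂ)) *
            star (hρ.eigenvectorUnitary : Matrix n n ℂ)) := congrArg _ hρ.spectral_theorem
    _ = _ := by rw [← mul_assoc, ← mul_assoc, Unitary.coe_star_mul_self, one_mul]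

lemma star_eigenvectorUnitary_mul_suppProj :
    star (hρ.eigenvectorUnitary : Matrix n n ℂ) * suppProj ρ hρ
      = diagonal (fun i => if hρ.eigenvalues i = 0 then (0 : ℂ) else 1) *
          star (hρ.eigenvectorUnitary : Matrix n n ℂ) := by
  rw [suppProj, ← mul_assoc, ← mul_assoc, Unitary.coe_star_mul_self, one_mul]

lemma apply_self_mul_eq_of_suppProj_mul_diagonal_eq_smul {c : ℝ}
    (hprop : suppProj ρ hρ * diagonal (fun j => ρ j j) = (c : ℂ) • ρ) {i j : n}
    (hU : (hρ.eigenvectorUnitary : Matrix n n ℂ) j i ≠ 0) :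
    (if hρ.eigenvalues i = 0 then 0 else 1) * ρ j j = c * hρ.eigenvalues i := by
  have h := congrArg (star (hρ.eigenvectorUnitary : Matrix n n ℂ) * ·) hprop
  rw [← mul_assoc, star_eigenvectorUnitary_mul_suppProj, Matrix.mul_smul,
    star_eigenvectorUnitary_mul] at h
  have h := congrFun (congrFun h i) j
  rw [mul_diagonal, diagonal_mul, smul_apply, diagonal_mul, smul_eq_mul] at h
  have hs : star (hρ.eigenvectorUnitary : Matrix n n ℂ) i j ≠ 0 := by simpa [star_apply] using hU
  apply mul_right_cancel₀ hs
  linear_combination h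

end Matrix.IsHermitian

lemma re_mrpow_apply_self_of_suppProj_mul_diagonal_eq_smul {n : Type*} [Fintype n]
    [DecidableEq n] {ρ : Matrix n n ℂ} (hρ : ρ.PosSemidef) {c α : ℝ} (hc : 0 < c) (hα : 0 < α)
    (hprop : suppProj ρ hρ.1 * diagonal (fun j => ρ j j) = (c : ℂ) • ρ) (j : n) :
    (mrpow ρ hρ.1 α j j).re = c ^ (1 - α) * (ρ j j).re ^ α := by
  have hρjj : ρ j j = ((ρ j j).re : ℂ) := (hρ.1.coe_re_apply_self j).symm
  rw [mrpow, mul_diagonal_mul_star_apply_self]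
  push_cast [← Complex.ofReal_mul, ← Complex.ofReal_sum, Complex.ofReal_re]
  refine sum_rpow_mul_eq_of_support_relation (Complex.nonneg_iff.mp hρ.diag_nonneg).1 hc hα
    (fun i hw => ?_) ?_
  · have h := hρ.1.apply_self_mul_eq_of_suppProj_mul_diagonal_eq_smul hprop
      (j := j) (i := i) (by simpa using hw)
    rw [hρjj] at h
    simpa [apply_ite Complex.re] using congrArg Complex.re h
  · have h := congrFun (congrFun hprop j) j
    rw [mul_diagonal, Matrix.smul_apply, suppProj, mul_diagonal_mul_star_apply_self, hρjj,
      smul_eq_mul] at h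
    simpa [apply_ite Complex.re, Complex.re_sum] using congrArg Complex.re h

theorem renyiCoherence_of_prop_diag_general {d : ℕ}
    (ρ : Matrix (Fin d) (Fin d) ℂ) (hρ : ρ.PosSemidef) (htr : ρ.trace = 1)
    (ρdiag : Matrix (Fin d) (Fin d) ℂ)
    (hdiag : ρdiag = Matrix.diagonal (fun j => ρ j j))
    (c : ℝ) (hc : 0 < c)
    (hprop : suppProj ρ hρ.1 * ρdiag = (c : ℂ) • ρ)
    (α : ℝ) (hα0 : 0 < α) (hα1 : α ≠ 1) :
    (α - 1)⁻¹ * Real.log ((∑ j, ((mrpow ρ hρ.1 α) j j).re ^ α⁻¹) ^ α)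
      = - Real.log c := by
  subst hdiag
  have hsum : ∑ j, (ρ j j).re = 1 := by
    simpa [trace, Complex.re_sum] using congrArg Complex.re htr
  rw [sum_rpow_inv_rpow_eq (Real.rpow_nonneg hc.le _) hα0.ne'
      (fun j => (Complex.nonneg_iff.mp hρ.diag_nonneg).1) hsum
      (re_mrpow_apply_self_of_suppProj_mul_diagonal_eq_smul hρ hc hα0 hprop),
    Real.log_rpow hc]
  field_simp [sub_ne_zero.mpr hα1]
  ring

/-- If a density matrix `ρ` commutes with its diagonal part `ρ^diag` and satisfies
`Π_ρ ρ^diag = c ρ` with `c > 0`, where `Π_ρ` projects onto the support of `ρ`, then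
its Rényi relative entropy of coherence
`C_{r,α}(ρ) = (α−1)⁻¹ ln ‖(ρ^α)^diag‖_{1/α}` equals `−ln c` for all `α ∈ (0,∞)`, `α ≠ 1`. -/
theorem renyiCoherence_of_prop_diag {d : ℕ}
    (ρ : Matrix (Fin d) (Fin d) ℂ) (hρ : ρ.PosSemidef) (htr : ρ.trace = 1)
    (ρdiag : Matrix (Fin d) (Fin d) ℂ)
    (hdiag : ρdiag = Matrix.diagonal (fun j => ρ j j))
    (hcomm : ρ * ρdiag = ρdiag * ρ)
    (c : ℝ) (hc : 0 < c)
    (hprop : suppProj ρ hρ.1 * ρdiag = (c : ℂ) • ρ)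
    (α : ℝ) (hα0 : 0 < α) (hα1 : α ≠ 1) :
    (α - 1)⁻¹ * Real.log ((∑ j, ((mrpow ρ hρ.1 α) j j).re ^ α⁻¹) ^ α)
      = - Real.log c :=
  renyiCoherence_of_prop_diag_general ρ hρ htr ρdiag hdiag c hc hprop α hα0 hα1
end
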